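/- arXiv:2503.10013 — 5 statements merged into one kernel-verified Lean document; each statement's English description precedes it below -/
import Mathlib

section
/- Let K ⊆ ℝ^n be a nonempty compact convex set, let d ∈ ℤ⁺, and let f_1, …, f_T : ℝ^n → ℝ be loss functions each of which is λ-strongly convex over K (λ > 0) with gradients bounded by G on K, i.e., ‖∇f_t(x)‖₂ ≤ G for all x ∈ K and all t. For each t ∈ {1,…,T} let F_t be a set of timestamps with {1,…,t−d} ⊆ F_t ⊆ {1,…,t−1}, and let the FTDL decision x_t be a minimizer over K of Σ_{s∈F_t} f_s(x) (an arbitrary x_t ∈ K when F_t = ∅). Then the regret satisfies Σ_{t=1}^T f_t(x_t) − min_{x∈K} Σ_{t=1}^T f_t(x) ≤ 2dG²(1 + ln T)/λ. -/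
open scoped RealInnerProductSpace
open Finset Filter Topology

/-!
Let `z t` minimize the full prefix sum `f 1 + ⋯ + f t` over `K` (the leader). By induction on `T`
the leaders do at least as well as any fixed `y ∈ K` ("be the leader"), so the regret is at most
`∑ t, (f t (x t) - f t (z t))`. The FTDL objective at round `t` misses at most `d` terms of the
leader's objective. Strong convexity of both sums gives quadratic growth around their minimizers,
and the missing terms are `G`-Lipschitz on `K`, so `t λ / 2 ‖x t - z t‖ ≤ d G`. Hence
`f t (x t) - f t (z t) ≤ G ‖x t - z t‖ ≤ 2 d G² / (λ t)`, and the harmonic sum is at most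
`1 + log T`.
-/

section StrongConvexity

variable {E : Type*} [NormedAddCommGroup E] [InnerProductSpace ℝ E]

/-- First-order `lam`-strong convexity on `K`, with `g` in the role of the gradient. -/
def FirstOrderStrongConvexOn (K : Set E) (lam : ℝ) (f : E → ℝ) (g : E → E) : Prop :=
  ∀ x ∈ K, ∀ y ∈ K, f x + ⟪g x, y - x⟫ + lam / 2 * ‖x - y‖ ^ 2 ≤ f y

namespace FirstOrderStrongConvexOn

variable {K : Set E} {lam G : ℝ}

theorem sum {ι : Type*} (S : Finset ι) {f : ι → E → ℝ} {g : ι → E → E}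
    (h : ∀ i ∈ S, FirstOrderStrongConvexOn K lam (f i) (g i)) :
    FirstOrderStrongConvexOn K (#S * lam) (fun p => ∑ i ∈ S, f i p)
      (fun p => ∑ i ∈ S, g i p) := by
  intro x hx y hy
  have hsum := sum_le_sum fun i hi => h i hi x hx y hy
  simp only [sum_add_distrib, sum_const, nsmul_eq_mul] at hsum
  rw [sum_inner]
  linarith

variable {f : E → ℝ} {g : E → E}

/-- No differentiability is assumed, so instead of the first-order optimality condition we
average the defining inequality at `w = u + θ (v - u)` towards `u` and `v`, which cancels the
gradient term, and let `θ → 0`. -/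
theorem add_mul_sq_le_of_isMinOn (hf : FirstOrderStrongConvexOn K lam f g) (hK : Convex ℝ K)
    {u v : E} (hu : u ∈ K) (hv : v ∈ K) (hmin : IsMinOn f K u) :
    f u + lam / 2 * ‖u - v‖ ^ 2 ≤ f v := by
  set R := ‖u - v‖ ^ 2
  have hseg : ∀ θ ∈ Set.Ioo (0 : ℝ) 1, f u + lam / 2 * (1 - θ) * R ≤ f v := by
    rintro θ ⟨hθ0, hθ1⟩
    set w := u + θ • (v - u)
    have hw : w ∈ K := by
      convert hK hu hv (sub_nonneg.2 hθ1.le) hθ0.le (sub_add_cancel 1 θ) using 1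
      simp only [w]
      module
    have hinner : (1 - θ) * ⟪g w, u - w⟫ + θ * ⟪g w, v - w⟫ = 0 := by
      rw [← real_inner_smul_right, ← real_inner_smul_right, ← inner_add_right]
      convert inner_zero_right (g w) using 2
      simp only [w]
      module
    have hwu : ‖w - u‖ ^ 2 = θ ^ 2 * R := by
      rw [show w - u = θ • (v - u) by simp only [w]; abel, norm_smul,
        Real.norm_of_nonneg hθ0.le, norm_sub_rev]
      ring
    have hwv : ‖w - v‖ ^ 2 = (1 - θ) ^ 2 * R := by
      rw [show w - v = (1 - θ) • (u - v) by simp only [w]; module, norm_smul,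
        Real.norm_of_nonneg (sub_nonneg.2 hθ1.le)]
      ring
    have hgu := hf w hw u hu
    have hgv := hf w hw v hv
    rw [hwu] at hgu
    rw [hwv] at hgv
    have huw : f u ≤ f w := isMinOn_iff.mp hmin w hw
    have hscaled : θ * (f u + lam / 2 * (1 - θ) * R) ≤ θ * f v := by
      nlinarith [mul_le_mul_of_nonneg_left hgu (sub_nonneg.2 hθ1.le),
        mul_le_mul_of_nonneg_left hgv hθ0.le]
    exact le_of_mul_le_mul_left hscaled hθ0
  have hlim : Tendsto (fun θ : ℝ => f u + lam / 2 * (1 - θ) * R) (𝓝[>] 0)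
      (𝓝 (f u + lam / 2 * (1 - 0) * R)) :=
    (Continuous.tendsto (by fun_prop) 0).mono_left nhdsWithin_le_nhds
  simpa using le_of_tendsto hlim (eventually_of_mem (Ioo_mem_nhdsGT one_pos) hseg)

theorem sub_le_mul_norm (hf : FirstOrderStrongConvexOn K lam f g) (hlam : 0 ≤ lam)
    (hg : ∀ x ∈ K, ‖g x‖ ≤ G) {a b : E} (ha : a ∈ K) (hb : b ∈ K) :
    f a - f b ≤ G * ‖a - b‖ := by
  have h := hf a ha b hb
  have hquad : 0 ≤ lam / 2 * ‖a - b‖ ^ 2 := by positivity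
  calc f a - f b ≤ -⟪g a, b - a⟫ := by linarith
    _ ≤ ‖g a‖ * ‖b - a‖ := (neg_le_abs _).trans (abs_real_inner_le_norm _ _)
    _ ≤ G * ‖a - b‖ := by rw [norm_sub_rev]; gcongr; exact hg a ha

theorem continuousOn (hf : FirstOrderStrongConvexOn K lam f g) (hlam : 0 ≤ lam)
    (hg : ∀ x ∈ K, ‖g x‖ ≤ G) : ContinuousOn f K :=
  (LipschitzOnWith.of_le_add_mul' G fun a ha b hb => by
    rw [dist_eq_norm]; linarith [hf.sub_le_mul_norm hlam hg ha hb]).continuousOn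

end FirstOrderStrongConvexOn

variable {ι : Type*} [DecidableEq ι] {K : Set E} {lam G : ℝ} {f : ι → E → ℝ} {g : ι → E → E}
  {A B : Finset ι} {u v : E}

theorem mul_norm_sub_le_of_isMinOn (hK : Convex ℝ K) (hAB : A ⊆ B) (hlam : 0 ≤ lam)
    (hG : 0 ≤ G) (hf : ∀ i ∈ B, FirstOrderStrongConvexOn K lam (f i) (g i))
    (hg : ∀ i ∈ B, ∀ x ∈ K, ‖g i x‖ ≤ G) (hu : u ∈ K) (hv : v ∈ K)
    (humin : IsMinOn (fun p => ∑ i ∈ A, f i p) K u)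
    (hvmin : IsMinOn (fun p => ∑ i ∈ B, f i p) K v) :
    #B * lam / 2 * ‖u - v‖ ≤ #(B \ A) * G := by
  set r := ‖u - v‖
  have hA := (FirstOrderStrongConvexOn.sum A fun i hi => hf i (hAB hi)).add_mul_sq_le_of_isMinOn
    hK hu hv humin
  have hB := (FirstOrderStrongConvexOn.sum B hf).add_mul_sq_le_of_isMinOn hK hv hu hvmin
  rw [norm_sub_rev] at hB
  have hmissing : ∑ i ∈ B \ A, (f i u - f i v) ≤ #(B \ A) * (G * r) := by
    rw [← nsmul_eq_mul]
    exact sum_le_card_nsmul _ _ _ fun i hi =>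
      (hf i (Finset.mem_sdiff.mp hi).1).sub_le_mul_norm hlam (hg i (Finset.mem_sdiff.mp hi).1) hu hv
  have hsplit_u := sum_sdiff (f := fun i => f i u) hAB
  have hsplit_v := sum_sdiff (f := fun i => f i v) hAB
  rw [sum_sub_distrib] at hmissing
  have hAquad : 0 ≤ #A * lam / 2 * r ^ 2 := by positivity
  have hsq : (#B * lam / 2 * r) * r ≤ (#(B \ A) * G) * r := by nlinarith
  rcases (norm_nonneg _ : 0 ≤ r).eq_or_lt with hr | hr
  · rw [show r = 0 from hr.symm, mul_zero]
    positivity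
  · exact le_of_mul_le_mul_right hsq hr

theorem apply_sub_apply_le_of_isMinOn (hK : Convex ℝ K) (hAB : A ⊆ B) (hlam : 0 < lam)
    (hf : ∀ i ∈ B, FirstOrderStrongConvexOn K lam (f i) (g i))
    (hg : ∀ i ∈ B, ∀ x ∈ K, ‖g i x‖ ≤ G) (hu : u ∈ K) (hv : v ∈ K)
    (humin : IsMinOn (fun p => ∑ i ∈ A, f i p) K u)
    (hvmin : IsMinOn (fun p => ∑ i ∈ B, f i p) K v) {j : ι} (hj : j ∈ B) :
    f j u - f j v ≤ 2 * #(B \ A) * G ^ 2 / (#B * lam) := by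
  have hG : 0 ≤ G := (norm_nonneg _).trans (hg j hj u hu)
  have hB : (0 : ℝ) < #B * lam := by
    have : 0 < #B := card_pos.mpr ⟨j, hj⟩
    positivity
  have hdist : ‖u - v‖ ≤ 2 * #(B \ A) * G / (#B * lam) := by
    rw [le_div_iff₀ hB]
    linarith [mul_norm_sub_le_of_isMinOn hK hAB hlam.le hG hf hg hu hv humin hvmin]
  calc f j u - f j v ≤ G * ‖u - v‖ := (hf j hj).sub_le_mul_norm hlam.le (hg j hj) hu hv
    _ ≤ G * (2 * #(B \ A) * G / (#B * lam)) := by gcongr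
    _ = 2 * #(B \ A) * G ^ 2 / (#B * lam) := by ring

end StrongConvexity

section Leaders

variable {α : Type*} {K : Set α} {f : ℕ → α → ℝ}

theorem exists_isMinOn_partial_sums [TopologicalSpace α] (hK : IsCompact K) (hne : K.Nonempty)
    {T : ℕ} (hf : ∀ t ∈ Icc 1 T, ContinuousOn (f t) K) :
    ∃ z : ℕ → α, (∀ t, z t ∈ K) ∧
      ∀ t ∈ Icc 1 T, IsMinOn (fun p => ∑ s ∈ Icc 1 t, f s p) K (z t) := by
  have hleader :
      ∀ t, ∃ z ∈ K, t ≤ T → IsMinOn (fun p => ∑ s ∈ Icc 1 t, f s p) K z := by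
    intro t
    by_cases htT : t ≤ T
    · obtain ⟨z, hz, hmin⟩ := hK.exists_isMinOn hne
        (continuousOn_finsetSum _ fun s hs => hf s (Icc_subset_Icc_right htT hs))
      exact ⟨z, hz, fun _ => hmin⟩
    · exact ⟨hne.some, hne.some_mem, fun h => absurd h htT⟩
  choose z hzK hz using hleader
  exact ⟨z, hzK, fun t ht => hz t (mem_Icc.mp ht).2⟩

theorem sum_Icc_le_of_isMinOn_partial_sums {z : ℕ → α} (T : ℕ) (hzK : ∀ t, z t ∈ K)
    (hz : ∀ t ∈ Icc 1 T, IsMinOn (fun p => ∑ s ∈ Icc 1 t, f s p) K (z t))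
    {y : α} (hy : y ∈ K) :
    ∑ t ∈ Icc 1 T, f t (z t) ≤ ∑ t ∈ Icc 1 T, f t y := by
  induction T generalizing y with
  | zero => simp
  | succ T ih =>
    have hprev := ih (fun t ht => hz t (Icc_subset_Icc_right T.le_succ ht)) (hzK (T + 1))
    have hlast := isMinOn_iff.mp (hz (T + 1) (right_mem_Icc.mpr (by omega))) y hy
    simp only [sum_Icc_succ_top (Nat.le_add_left 1 T)] at hprev hlast ⊢
    linarith

end Leaders

theorem card_Icc_sdiff_le {F : Finset ℕ} {t d : ℕ} (h : Icc 1 (t - d) ⊆ F) :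
    #(Icc 1 t \ F) ≤ d :=
  calc #(Icc 1 t \ F) ≤ #(Icc 1 t \ Icc 1 (t - d)) :=
        card_le_card (sdiff_subset_sdiff subset_rfl h)
    _ = t - (t - d) := by
      rw [card_sdiff_of_subset (Icc_subset_Icc_right (Nat.sub_le t d))]
      simp
    _ ≤ d := by omega

theorem sum_Icc_mul_inv_le_mul_one_add_log {c : ℝ} (hc : 0 ≤ c) (T : ℕ) :
    ∑ t ∈ Icc 1 T, c * (t : ℝ)⁻¹ ≤ c * (1 + Real.log T) := by
  rw [← mul_sum]
  gcongr
  simpa [harmonic_eq_sum_Icc] using harmonic_le_one_add_log T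

theorem ftdl_regret_strongly_convex_general {n : ℕ}
    (K : Set (EuclideanSpace ℝ (Fin n)))
    (hKcp : IsCompact K) (hKcv : Convex ℝ K)
    (d T : ℕ)
    (f : ℕ → EuclideanSpace ℝ (Fin n) → ℝ)
    (lam G : ℝ) (hlam : 0 < lam)
    (hsc : ∀ t ∈ Finset.Icc 1 T, ∀ x ∈ K, ∀ y ∈ K,
      f t x + ⟪gradient (f t) x, y - x⟫ + lam / 2 * ‖x - y‖ ^ 2 ≤ f t y)
    (hG : ∀ t ∈ Finset.Icc 1 T, ∀ x ∈ K, ‖gradient (f t) x‖ ≤ G)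
    (F : ℕ → Finset ℕ)
    (hF1 : ∀ t ∈ Finset.Icc 1 T, Finset.Icc 1 (t - d) ⊆ F t)
    (hF2 : ∀ t ∈ Finset.Icc 1 T, F t ⊆ Finset.Icc 1 (t - 1))
    (x : ℕ → EuclideanSpace ℝ (Fin n))
    (hxK : ∀ t ∈ Finset.Icc 1 T, x t ∈ K)
    (hxmin : ∀ t ∈ Finset.Icc 1 T, ∀ y ∈ K,
      ∑ s ∈ F t, f s (x t) ≤ ∑ s ∈ F t, f s y) :
    ∀ y ∈ K,
      ∑ t ∈ Finset.Icc 1 T, f t (x t) - ∑ t ∈ Finset.Icc 1 T, f t y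
        ≤ 2 * d * G ^ 2 * (1 + Real.log T) / lam := by
  intro y hy
  obtain ⟨z, hzK, hz⟩ := exists_isMinOn_partial_sums hKcp ⟨y, hy⟩ fun t ht =>
    FirstOrderStrongConvexOn.continuousOn (hsc t ht) hlam.le (hG t ht)
  have hstep :
      ∀ t ∈ Icc 1 T, f t (x t) - f t (z t) ≤ 2 * d * G ^ 2 / lam * (t : ℝ)⁻¹ := by
    intro t ht
    have hFt : F t ⊆ Icc 1 t := (hF2 t ht).trans (Icc_subset_Icc_right (Nat.sub_le t 1))
    have hIcc : Icc 1 t ⊆ Icc 1 T := Icc_subset_Icc_right (mem_Icc.mp ht).2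
    calc f t (x t) - f t (z t) ≤ 2 * #(Icc 1 t \ F t) * G ^ 2 / (#(Icc 1 t) * lam) :=
          apply_sub_apply_le_of_isMinOn hKcv hFt hlam (fun s hs => hsc s (hIcc hs))
            (fun s hs => hG s (hIcc hs)) (hxK t ht) (hzK t) (isMinOn_iff.mpr (hxmin t ht))
            (hz t ht) (right_mem_Icc.mpr (mem_Icc.mp ht).1)
      _ ≤ 2 * d * G ^ 2 / (t * lam) := by
          rw [Nat.card_Icc, Nat.add_sub_cancel]
          gcongr
          exact_mod_cast card_Icc_sdiff_le (hF1 t ht)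
      _ = 2 * d * G ^ 2 / lam * (t : ℝ)⁻¹ := by ring
  calc ∑ t ∈ Icc 1 T, f t (x t) - ∑ t ∈ Icc 1 T, f t y
      ≤ ∑ t ∈ Icc 1 T, (f t (x t) - f t (z t)) := by
        rw [sum_sub_distrib]
        linarith [sum_Icc_le_of_isMinOn_partial_sums T hzK hz hy]
    _ ≤ ∑ t ∈ Icc 1 T, 2 * d * G ^ 2 / lam * (t : ℝ)⁻¹ := sum_le_sum hstep
    _ ≤ 2 * d * G ^ 2 / lam * (1 + Real.log T) :=
        sum_Icc_mul_inv_le_mul_one_add_log (by positivity) T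
    _ = 2 * d * G ^ 2 * (1 + Real.log T) / lam := by ring

/-- Regret bound of FTDL for strongly convex functions:
`R_T ≤ 2dG²(1 + ln T)/λ`. -/
theorem ftdl_regret_strongly_convex {n : ℕ}
    (K : Set (EuclideanSpace ℝ (Fin n)))
    (hKne : K.Nonempty) (hKcp : IsCompact K) (hKcv : Convex ℝ K)
    (d T : ℕ) (hd : 1 ≤ d) (hT : 1 ≤ T)
    (f : ℕ → EuclideanSpace ℝ (Fin n) → ℝ)
    (lam G : ℝ) (hlam : 0 < lam)
    (hsc : ∀ t ∈ Finset.Icc 1 T, ∀ x ∈ K, ∀ y ∈ K,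
      f t x + ⟪gradient (f t) x, y - x⟫ + lam / 2 * ‖x - y‖ ^ 2 ≤ f t y)
    (hG : ∀ t ∈ Finset.Icc 1 T, ∀ x ∈ K, ‖gradient (f t) x‖ ≤ G)
    (F : ℕ → Finset ℕ)
    (hF1 : ∀ t ∈ Finset.Icc 1 T, Finset.Icc 1 (t - d) ⊆ F t)
    (hF2 : ∀ t ∈ Finset.Icc 1 T, F t ⊆ Finset.Icc 1 (t - 1))
    (x : ℕ → EuclideanSpace ℝ (Fin n))
    (hxK : ∀ t ∈ Finset.Icc 1 T, x t ∈ K)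
    (hxmin : ∀ t ∈ Finset.Icc 1 T, ∀ y ∈ K,
      ∑ s ∈ F t, f s (x t) ≤ ∑ s ∈ F t, f s y) :
    ∀ y ∈ K,
      ∑ t ∈ Finset.Icc 1 T, f t (x t) - ∑ t ∈ Finset.Icc 1 T, f t y
        ≤ 2 * d * G ^ 2 * (1 + Real.log T) / lam :=
  ftdl_regret_strongly_convex_general K hKcp hKcv d T f lam G hlam hsc hG F hF1 hF2 x hxK hxmin
end

section
/- Let K ⊆ ℝ^n be a nonempty compact convex set containing the origin with ‖x‖₂ ≤ R for all x ∈ K, let d ∈ ℤ⁺, and let f_1, …, f_T : ℝ^n → ℝ be λ-strongly convex over K (λ > 0) with ‖∇f_t(x)‖₂ ≤ G for all x ∈ K and all t. For each t let F_t satisfy {1,…,t−d} ⊆ F_t ⊆ {1,…,t−1}, set z_s = ∇f_s(x_s) − λ x_s, and let the approximate-FTDL decision x_t be a minimizer over K of Σ_{s∈F_t} (⟨z_s, x⟩ + (λ/2)‖x‖₂²) (an arbitrary x_t ∈ K when F_t = ∅). Then the regret satisfies Σ_{t=1}^T f_t(x_t) − min_{x∈K} Σ_{t=1}^T f_t(x)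 ≤ 2d(G + 2λR)²(ln T + 1)/λ. -/
/-!
Strong convexity lets one replace `f t` by the quadratic surrogate
`g t p = ⟪z t, p⟫ + (λ/2)‖p‖²` (`quadLoss λ (z t)`), whose regret dominates the true regret.
By the be-the-leader lemma the surrogate regret is at most `∑ t, g t (x t) - g t (v t)`, where
the leader `v t` minimises `∑ s ≤ t, g s` over `K`. Every `g s` is `(G + 2λR)`-Lipschitz on `K`,
and `x t`, `v t` minimise `λ|F t|`- and `λt`-strongly convex quadratics that differ by at most
`d` of the `g s`, so `‖x t - v t‖ ≤ d(G + 2λR)/(λ(t - d))` for `t > d`; each of the first `d`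
rounds costs at most `(G + 2λR)²/λ`. Summing the harmonic series gives the bound.
-/

open scoped RealInnerProductSpace

open Finset

lemma sum_le_sum_of_isMinOn_partial_sums {α : Type*} {K : Set α} (ℓ : ℕ → α → ℝ) {v : ℕ → α}
    (hvK : ∀ t, v t ∈ K) (hv : ∀ t, IsMinOn (fun p => ∑ s ∈ Icc 1 t, ℓ s p) K (v t))
    (T : ℕ) {y : α} (hy : y ∈ K) :
    ∑ t ∈ Icc 1 T, ℓ t (v t) ≤ ∑ t ∈ Icc 1 T, ℓ t y := by
  suffices h : ∀ T, ∑ t ∈ Icc 1 T, ℓ t (v t) ≤ ∑ t ∈ Icc 1 T, ℓ t (v T) from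
    (h T).trans (hv T hy)
  intro T
  induction T with
  | zero => simp
  | succ m ih =>
    rw [sum_Icc_succ_top (by omega), sum_Icc_succ_top (by omega)]
    have hm : ∑ t ∈ Icc 1 m, ℓ t (v m) ≤ ∑ t ∈ Icc 1 m, ℓ t (v (m + 1)) := hv m (hvK (m + 1))
    linarith

lemma sum_delayed_harmonic_le (d T : ℕ) :
    ∑ t ∈ Icc 1 T, (if t ≤ d then (1 : ℝ) else (d : ℝ) / (t - d : ℕ))
      ≤ 2 * d * (Real.log T + 1) := by
  rw [sum_ite, sum_const, nsmul_one]
  have hcard : #{t ∈ Icc 1 T | t ≤ d} ≤ d := by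
    calc #{t ∈ Icc 1 T | t ≤ d} ≤ #(Icc 1 d) :=
          card_le_card fun t ht => by simp only [mem_filter, mem_Icc] at ht ⊢; omega
      _ = d := by simp
  have hlate : {t ∈ Icc 1 T | ¬t ≤ d} = (Icc 1 (T - d)).map (addRightEmbedding d) := by
    ext t
    simp only [mem_filter, mem_Icc, mem_map, addRightEmbedding_apply]
    constructor
    · intro ht; exact ⟨t - d, by omega, by omega⟩
    · rintro ⟨k, hk, rfl⟩; omega
  have hharm : ∑ t ∈ {t ∈ Icc 1 T | ¬t ≤ d}, (d : ℝ) / (t - d : ℕ) = d * harmonic (T - d) := by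
    rw [hlate, sum_map, harmonic_eq_sum_Icc]
    push_cast
    rw [mul_sum]
    refine sum_congr rfl fun k _ => ?_
    simp [div_eq_mul_inv]
  have hlog : Real.log (T - d : ℕ) ≤ Real.log T := by
    rcases Nat.eq_zero_or_pos (T - d) with h | h
    · simpa [h] using Real.log_natCast_nonneg T
    · exact Real.log_le_log (by exact_mod_cast h) (by exact_mod_cast Nat.sub_le T d)
  have hlate_le : (d : ℝ) * harmonic (T - d) ≤ d * (1 + Real.log T) :=
    mul_le_mul_of_nonneg_left ((harmonic_le_one_add_log _).trans (by linarith))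
      (Nat.cast_nonneg d)
  have hearly : (#{t ∈ Icc 1 T | t ≤ d} : ℝ) ≤ d := by exact_mod_cast hcard
  rw [hharm]
  linarith [mul_nonneg (Nat.cast_nonneg (α := ℝ) d) (Real.log_natCast_nonneg T)]

section QuadLoss

variable {E : Type*} [NormedAddCommGroup E] [InnerProductSpace ℝ E]

noncomputable def quadLoss (lam : ℝ) (w p : E) : ℝ := ⟪w, p⟫ + lam / 2 * ‖p‖ ^ 2

lemma continuous_quadLoss (lam : ℝ) (w : E) : Continuous (quadLoss lam w) :=
  (continuous_const.inner continuous_id).add (continuous_const.mul (continuous_norm.pow 2))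

lemma sum_quadLoss {ι : Type*} (A : Finset ι) (lam : ℝ) (w : ι → E) (p : E) :
    ∑ s ∈ A, quadLoss lam (w s) p = quadLoss (lam * #A) (∑ s ∈ A, w s) p := by
  simp only [quadLoss, sum_add_distrib, sum_inner, sum_const, nsmul_eq_mul]
  ring

lemma quadLoss_eq_add (c : ℝ) (w u v : E) :
    quadLoss c w v = quadLoss c w u + ⟪w + c • u, v - u⟫ + c / 2 * ‖v - u‖ ^ 2 := by
  simp only [quadLoss, inner_add_left, inner_sub_right, real_inner_smul_left,
    real_inner_self_eq_norm_sq, norm_sub_sq_real, real_inner_comm u v]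
  ring

lemma hasFDerivAt_quadLoss (c : ℝ) (w u : E) :
    HasFDerivAt (quadLoss c w) (innerSL ℝ (w + c • u)) u := by
  refine (((innerSL ℝ w).hasFDerivAt (x := u)).add
    ((hasStrictFDerivAt_norm_sq u).hasFDerivAt.const_mul (c / 2))).congr_fderiv ?_
  ext v
  simp only [innerSL_apply_apply, inner_add_left, real_inner_smul_left,
    add_apply, smul_apply, nsmul_eq_mul]
  ring

lemma quadLoss_add_le_of_isMinOn {K : Set E} (hK : Convex ℝ K) {c : ℝ} {w u v : E}
    (hu : u ∈ K) (hv : v ∈ K) (hmin : IsMinOn (quadLoss c w) K u) :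
    quadLoss c w u + c / 2 * ‖v - u‖ ^ 2 ≤ quadLoss c w v := by
  have hcone : v - u ∈ posTangentConeAt K u :=
    mem_posTangentConeAt_of_segment_subset (by simpa using hK.segment_subset hu hv)
  have hfirst : 0 ≤ ⟪w + c • u, v - u⟫ :=
    hmin.localize.hasFDerivWithinAt_nonneg
      (hasFDerivAt_quadLoss c w u).hasFDerivWithinAt hcone
  linarith [quadLoss_eq_add c w u v]

lemma quadLoss_sub_le {lam a R : ℝ} (hlam : 0 ≤ lam) {w u v : E} (hw : ‖w‖ ≤ a)
    (hu : ‖u‖ ≤ R) (hv : ‖v‖ ≤ R) :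
    quadLoss lam w u - quadLoss lam w v ≤ (a + lam * R) * ‖u - v‖ := by
  have hid : quadLoss lam w u - quadLoss lam w v = ⟪w, u - v⟫ + lam / 2 * ⟪u + v, u - v⟫ := by
    simp only [quadLoss, inner_add_left, inner_sub_right, real_inner_self_eq_norm_sq,
      real_inner_comm v u]
    ring
  have hw' : ⟪w, u - v⟫ ≤ a * ‖u - v‖ :=
    (real_inner_le_norm _ _).trans (mul_le_mul_of_nonneg_right hw (norm_nonneg _))
  have huv : ⟪u + v, u - v⟫ ≤ 2 * R * ‖u - v‖ :=
    (real_inner_le_norm _ _).trans (mul_le_mul_of_nonneg_right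
      ((norm_add_le u v).trans (by linarith)) (norm_nonneg _))
  rw [hid]
  nlinarith

lemma sub_le_quadLoss_sub {lam a b : ℝ} {g x y : E}
    (h : a + ⟪g, y - x⟫ + lam / 2 * ‖x - y‖ ^ 2 ≤ b) :
    a - b ≤ quadLoss lam (g - lam • x) x - quadLoss lam (g - lam • x) y := by
  have hid : quadLoss lam (g - lam • x) x - quadLoss lam (g - lam • x) y
      = -⟪g, y - x⟫ - lam / 2 * ‖x - y‖ ^ 2 := by
    simp only [quadLoss, inner_sub_left, inner_sub_right, real_inner_smul_left,
      real_inner_self_eq_norm_sq, norm_sub_sq_real, real_inner_comm y x]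
    ring
  linarith

lemma norm_sub_smul_le {lam G R : ℝ} (hlam : 0 ≤ lam) {g x : E} (hg : ‖g‖ ≤ G) (hx : ‖x‖ ≤ R) :
    ‖g - lam • x‖ ≤ G + lam * R := by
  refine (norm_sub_le _ _).trans (add_le_add hg ?_)
  rw [norm_smul, Real.norm_of_nonneg hlam]
  exact mul_le_mul_of_nonneg_left hx hlam

lemma sum_quadLoss_add_le_of_isMinOn {K : Set E} (hK : Convex ℝ K) (lam : ℝ) (z : ℕ → E)
    (A : Finset ℕ) {u v : E} (hu : u ∈ K) (hv : v ∈ K)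
    (hmin : IsMinOn (fun p => ∑ s ∈ A, quadLoss lam (z s) p) K u) :
    ∑ s ∈ A, quadLoss lam (z s) u + lam * #A / 2 * ‖v - u‖ ^ 2 ≤
      ∑ s ∈ A, quadLoss lam (z s) v := by
  simp only [sum_quadLoss] at hmin ⊢
  exact quadLoss_add_le_of_isMinOn hK hu hv hmin

lemma norm_sub_le_of_isMinOn_delayed {K : Set E} (hK : Convex ℝ K) {lam L : ℝ} (hlam : 0 < lam)
    (hL : 0 ≤ L) {z : ℕ → E} {F : Finset ℕ} {d t : ℕ} (hdt : d < t)
    (hF1 : Icc 1 (t - d) ⊆ F) (hF2 : F ⊆ Icc 1 t) {u v : E} (hu : u ∈ K) (hv : v ∈ K)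
    (hlip : ∀ s ∈ Icc 1 t, quadLoss lam (z s) u - quadLoss lam (z s) v ≤ L * ‖u - v‖)
    (humin : IsMinOn (fun p => ∑ s ∈ F, quadLoss lam (z s) p) K u)
    (hvmin : IsMinOn (fun p => ∑ s ∈ Icc 1 t, quadLoss lam (z s) p) K v) :
    ‖u - v‖ ≤ d * L / (lam * (t - d : ℕ)) := by
  set N := ‖u - v‖
  have hN : 0 ≤ N := norm_nonneg _
  have hcardF : ((t - d : ℕ) : ℝ) ≤ #F := by
    exact_mod_cast (card_le_card hF1).trans_eq' (by simp)
  have hcardD : (#(Icc 1 t \ F) : ℝ) ≤ d := by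
    have h := card_le_card (sdiff_subset_sdiff (subset_refl (Icc 1 t)) hF1)
    rw [card_sdiff_of_subset (Icc_subset_Icc_right (Nat.sub_le t d))] at h
    simp only [Nat.card_Icc] at h
    exact_mod_cast h.trans (by omega)
  have hgrowthF := sum_quadLoss_add_le_of_isMinOn hK lam z F hu hv humin
  have hgrowth := sum_quadLoss_add_le_of_isMinOn hK lam z (Icc 1 t) hv hu hvmin
  rw [norm_sub_rev] at hgrowthF
  rw [Nat.card_Icc, Nat.add_sub_cancel, ← sum_sdiff hF2, ← sum_sdiff hF2] at hgrowth
  have hdelayed : ∑ s ∈ Icc 1 t \ F, quadLoss lam (z s) u - ∑ s ∈ Icc 1 t \ F, quadLoss lam (z s) v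
      ≤ d * (L * N) := by
    rw [← sum_sub_distrib]
    refine (sum_le_card_nsmul _ _ _ fun s hs => hlip s (sdiff_subset hs)).trans ?_
    rw [nsmul_eq_mul]
    exact mul_le_mul_of_nonneg_right hcardD (by positivity)
  have hkey : lam * (t - d : ℕ) * N ^ 2 ≤ d * L * N := by
    have hlamN : 0 ≤ lam * N ^ 2 := by positivity
    have h1 := mul_le_mul_of_nonneg_left hcardF hlamN
    have h2 := mul_le_mul_of_nonneg_left (show ((t - d : ℕ) : ℝ) ≤ t by
      exact_mod_cast Nat.sub_le t d) hlamN
    linarith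
  have htd : (0 : ℝ) < (t - d : ℕ) := by exact_mod_cast Nat.sub_pos_of_lt hdt
  rw [le_div_iff₀ (by positivity)]
  rcases hN.eq_or_lt with h0 | hpos
  · rw [← h0]; simp only [zero_mul]; positivity
  · nlinarith

lemma quadLoss_sub_le_delayed {K : Set E} (hK : Convex ℝ K) {R lam G : ℝ}
    (hR : ∀ p ∈ K, ‖p‖ ≤ R) (hlam : 0 < lam) (hG : 0 ≤ G) {z : ℕ → E}
    {F : Finset ℕ} {d t : ℕ} (ht : 1 ≤ t) (hz : ∀ s ∈ Icc 1 t, ‖z s‖ ≤ G + lam * R)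
    (hF1 : Icc 1 (t - d) ⊆ F) (hF2 : F ⊆ Icc 1 t) {u v : E} (hu : u ∈ K) (hv : v ∈ K)
    (humin : IsMinOn (fun p => ∑ s ∈ F, quadLoss lam (z s) p) K u)
    (hvmin : IsMinOn (fun p => ∑ s ∈ Icc 1 t, quadLoss lam (z s) p) K v) :
    quadLoss lam (z t) u - quadLoss lam (z t) v
      ≤ (G + 2 * lam * R) ^ 2 / lam * (if t ≤ d then 1 else (d : ℝ) / (t - d : ℕ)) := by
  have hR0 : 0 ≤ R := (norm_nonneg u).trans (hR u hu)
  have hL : 0 ≤ G + 2 * lam * R := by positivity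
  have hlip : ∀ s ∈ Icc 1 t, quadLoss lam (z s) u - quadLoss lam (z s) v
      ≤ (G + 2 * lam * R) * ‖u - v‖ := fun s hs =>
    (quadLoss_sub_le hlam.le (hz s hs) (hR u hu) (hR v hv)).trans_eq (by ring)
  refine (hlip t (by simp [ht])).trans ?_
  split_ifs with htd
  · have huv : ‖u - v‖ ≤ 2 * R := (norm_sub_le u v).trans (by linarith [hR u hu, hR v hv])
    rw [mul_one, le_div_iff₀ hlam]
    calc (G + 2 * lam * R) * ‖u - v‖ * lam ≤ (G + 2 * lam * R) * (2 * lam * R) := by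
          nlinarith [mul_le_mul_of_nonneg_left huv hL]
      _ ≤ (G + 2 * lam * R) ^ 2 := by nlinarith
  · have hstab := norm_sub_le_of_isMinOn_delayed hK hlam hL (not_le.mp htd) hF1 hF2 hu hv
      hlip humin hvmin
    calc (G + 2 * lam * R) * ‖u - v‖
        ≤ (G + 2 * lam * R) * (d * (G + 2 * lam * R) / (lam * (t - d : ℕ))) :=
          mul_le_mul_of_nonneg_left hstab hL
      _ = (G + 2 * lam * R) ^ 2 / lam * ((d : ℝ) / (t - d : ℕ)) := by
          field_simp

end QuadLoss

theorem approximate_ftdl_regret_strongly_convex_general {n : ℕ}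
    (K : Set (EuclideanSpace ℝ (Fin n)))
    (hKne : K.Nonempty) (hKcp : IsCompact K) (hKcv : Convex ℝ K)
    (R : ℝ) (hR : ∀ u ∈ K, ‖u‖ ≤ R)
    (d T : ℕ)
    (f : ℕ → EuclideanSpace ℝ (Fin n) → ℝ)
    (lam G : ℝ) (hlam : 0 < lam)
    (hsc : ∀ t ∈ Finset.Icc 1 T, ∀ x ∈ K, ∀ y ∈ K,
      f t x + ⟪gradient (f t) x, y - x⟫ + lam / 2 * ‖x - y‖ ^ 2 ≤ f t y)
    (hG : ∀ t ∈ Finset.Icc 1 T, ∀ x ∈ K, ‖gradient (f t) x‖ ≤ G)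
    (F : ℕ → Finset ℕ)
    (hF1 : ∀ t ∈ Finset.Icc 1 T, Finset.Icc 1 (t - d) ⊆ F t)
    (hF2 : ∀ t ∈ Finset.Icc 1 T, F t ⊆ Finset.Icc 1 (t - 1))
    (x z : ℕ → EuclideanSpace ℝ (Fin n))
    (hz : ∀ s ∈ Finset.Icc 1 T, z s = gradient (f s) (x s) - lam • x s)
    (hxK : ∀ t ∈ Finset.Icc 1 T, x t ∈ K)
    (hxmin : ∀ t ∈ Finset.Icc 1 T, ∀ y ∈ K,
      ∑ s ∈ F t, (⟪z s, x t⟫ + lam / 2 * ‖x t‖ ^ 2)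
        ≤ ∑ s ∈ F t, (⟪z s, y⟫ + lam / 2 * ‖y‖ ^ 2)) :
    ∀ y ∈ K,
      ∑ t ∈ Finset.Icc 1 T, f t (x t) - ∑ t ∈ Finset.Icc 1 T, f t y
        ≤ 2 * d * (G + 2 * lam * R) ^ 2 * (Real.log T + 1) / lam := by
  intro y hy
  have hzG : ∀ s ∈ Icc 1 T, ‖z s‖ ≤ G + lam * R := fun s hs =>
    hz s hs ▸ norm_sub_smul_le hlam.le (hG s hs _ (hxK s hs)) (hR _ (hxK s hs))
  choose v hvK hvmin using fun t => hKcp.exists_isMinOn hKne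
    (continuous_finsetSum (Icc 1 t) fun s _ => continuous_quadLoss lam (z s)).continuousOn
  have hround : ∀ t ∈ Icc 1 T, quadLoss lam (z t) (x t) - quadLoss lam (z t) (v t)
      ≤ (G + 2 * lam * R) ^ 2 / lam * (if t ≤ d then 1 else (d : ℝ) / (t - d : ℕ)) := by
    intro t ht
    obtain ⟨ht1, htT⟩ := mem_Icc.mp ht
    exact quadLoss_sub_le_delayed hKcv hR hlam ((norm_nonneg _).trans (hG t ht _ (hxK t ht)))
      ht1 (fun s hs => hzG s (Icc_subset_Icc_right htT hs)) (hF1 t ht)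
      ((hF2 t ht).trans (Icc_subset_Icc_right (Nat.sub_le t 1))) (hxK t ht) (hvK t)
      (hxmin t ht) (hvmin t)
  have hleader := sum_le_sum_of_isMinOn_partial_sums (fun s => quadLoss lam (z s)) hvK hvmin T hy
  calc ∑ t ∈ Icc 1 T, f t (x t) - ∑ t ∈ Icc 1 T, f t y
      ≤ ∑ t ∈ Icc 1 T, (quadLoss lam (z t) (x t) - quadLoss lam (z t) y) := by
        rw [← sum_sub_distrib]
        refine sum_le_sum fun t ht => ?_
        rw [hz t ht]
        exact sub_le_quadLoss_sub (hsc t ht _ (hxK t ht) _ hy)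
    _ ≤ ∑ t ∈ Icc 1 T, (quadLoss lam (z t) (x t) - quadLoss lam (z t) (v t)) := by
        simp only [sum_sub_distrib]
        linarith
    _ ≤ (G + 2 * lam * R) ^ 2 / lam *
          ∑ t ∈ Icc 1 T, (if t ≤ d then 1 else (d : ℝ) / (t - d : ℕ)) := by
        rw [mul_sum]
        exact sum_le_sum hround
    _ ≤ (G + 2 * lam * R) ^ 2 / lam * (2 * d * (Real.log T + 1)) :=
        mul_le_mul_of_nonneg_left (sum_delayed_harmonic_le d T) (by positivity)
    _ = 2 * d * (G + 2 * lam * R) ^ 2 * (Real.log T + 1) / lam := by ring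

/-- Regret bound of approximate FTDL for strongly convex functions:
`R_T ≤ 2d(G + 2λR)²(ln T + 1)/λ`. -/
theorem approximate_ftdl_regret_strongly_convex {n : ℕ}
    (K : Set (EuclideanSpace ℝ (Fin n)))
    (hKne : K.Nonempty) (hKcp : IsCompact K) (hKcv : Convex ℝ K)
    (h0K : (0 : EuclideanSpace ℝ (Fin n)) ∈ K)
    (R : ℝ) (hR : ∀ u ∈ K, ‖u‖ ≤ R)
    (d T : ℕ) (hd : 1 ≤ d) (hT : 1 ≤ T)
    (f : ℕ → EuclideanSpace ℝ (Fin n) → ℝ)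
    (lam G : ℝ) (hlam : 0 < lam)
    (hsc : ∀ t ∈ Finset.Icc 1 T, ∀ x ∈ K, ∀ y ∈ K,
      f t x + ⟪gradient (f t) x, y - x⟫ + lam / 2 * ‖x - y‖ ^ 2 ≤ f t y)
    (hG : ∀ t ∈ Finset.Icc 1 T, ∀ x ∈ K, ‖gradient (f t) x‖ ≤ G)
    (F : ℕ → Finset ℕ)
    (hF1 : ∀ t ∈ Finset.Icc 1 T, Finset.Icc 1 (t - d) ⊆ F t)
    (hF2 : ∀ t ∈ Finset.Icc 1 T, F t ⊆ Finset.Icc 1 (t - 1))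
    (x z : ℕ → EuclideanSpace ℝ (Fin n))
    (hz : ∀ s ∈ Finset.Icc 1 T, z s = gradient (f s) (x s) - lam • x s)
    (hxK : ∀ t ∈ Finset.Icc 1 T, x t ∈ K)
    (hxmin : ∀ t ∈ Finset.Icc 1 T, ∀ y ∈ K,
      ∑ s ∈ F t, (⟪z s, x t⟫ + lam / 2 * ‖x t‖ ^ 2)
        ≤ ∑ s ∈ F t, (⟪z s, y⟫ + lam / 2 * ‖y‖ ^ 2)) :
    ∀ y ∈ K,
      ∑ t ∈ Finset.Icc 1 T, f t (x t) - ∑ t ∈ Finset.Icc 1 T, f t y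
        ≤ 2 * d * (G + 2 * lam * R) ^ 2 * (Real.log T + 1) / lam :=
  approximate_ftdl_regret_strongly_convex_general K hKne hKcp hKcv R hR d T f lam G hlam hsc hG F
    hF1 hF2 x z hz hxK hxmin
end

section
/- Let K ⊆ ℝ^n be a nonempty compact convex set and let f_1, …, f_T : ℝ^n → ℝ be convex differentiable functions with ‖∇f_t(x)‖₂ ≤ G for all x ∈ K and all t. For each t let x̃_t be a minimizer over K of Σ_{s=1}^t f_s(x), and let x_1,…,x_T ∈ K be arbitrary. Then Σ_{t=1}^T f_t(x_t) − min_{x∈K} Σ_{t=1}^T f_t(x) ≤ G · Σ_{t=1}^T ‖x_t − x̃_t‖₂. -/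
/-!
By the be-the-leader lemma the ideal decisions `x̃_t` have nonpositive regret, so the regret of
`x_t` is at most `∑_t (f_t(x_t) - f_t(x̃_t))`. The first-order characterization of convexity and
Cauchy–Schwarz bound each summand by `⟪∇f_t(x_t), x_t - x̃_t⟫ ≤ G ‖x_t - x̃_t‖`.
-/

open Finset RealInnerProductSpace

section FirstOrderConvexity

variable {E : Type*} [NormedAddCommGroup E] [NormedSpace ℝ E]
  {s : Set E} {f : E → ℝ} {a b : E}

theorem ConvexOn.apply_sub_le_sub_of_hasFDerivAt (hf : ConvexOn ℝ s f) (ha : a ∈ s) (hb : b ∈ s)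
    {f' : E →L[ℝ] ℝ} (hf' : HasFDerivAt f f' a) :
    f' (b - a) ≤ f b - f a := by
  have hline : ConvexOn ℝ (Set.Icc 0 1) (f ∘ AffineMap.lineMap (k := ℝ) a b) :=
    (hf.comp_affineMap _).subset (fun _ hτ => hf.1.lineMap_mem ha hb hτ) (convex_Icc 0 1)
  have hderiv : HasDerivAt (f ∘ AffineMap.lineMap (k := ℝ) a b) (f' (b - a)) 0 := by
    have hf'0 : HasFDerivAt f f' (AffineMap.lineMap a b (0 : ℝ)) := by
      rwa [AffineMap.lineMap_apply_zero]
    exact hf'0.comp_hasDerivAt 0 AffineMap.hasDerivAt_lineMap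
  simpa [slope_def_field] using
    hline.le_slope_of_hasDerivAt (by simp) (by simp) zero_lt_one hderiv

end FirstOrderConvexity

section GradientBound

variable {E : Type*} [NormedAddCommGroup E] [InnerProductSpace ℝ E] [CompleteSpace E]
  {s : Set E} {f : E → ℝ} {a b g : E}

theorem ConvexOn.sub_le_inner_of_hasGradientAt (hf : ConvexOn ℝ s f) (ha : a ∈ s) (hb : b ∈ s)
    (hg : HasGradientAt f g a) :
    f a - f b ≤ ⟪g, a - b⟫ := by
  have := hf.apply_sub_le_sub_of_hasFDerivAt ha hb hg.hasFDerivAt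
  rw [InnerProductSpace.toDual_apply_apply, ← neg_sub a b, inner_neg_right] at this
  linarith

theorem ConvexOn.sub_le_mul_norm_sub_of_hasGradientAt (hf : ConvexOn ℝ s f) (ha : a ∈ s)
    (hb : b ∈ s) (hg : HasGradientAt f g a) {G : ℝ} (hG : ‖g‖ ≤ G) :
    f a - f b ≤ G * ‖a - b‖ :=
  calc f a - f b ≤ ⟪g, a - b⟫ := hf.sub_le_inner_of_hasGradientAt ha hb hg
    _ ≤ ‖g‖ * ‖a - b‖ := real_inner_le_norm _ _
    _ ≤ G * ‖a - b‖ := by gcongr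

end GradientBound

theorem be_the_leader {α β : Type*} [AddCommMonoid β] [PartialOrder β] [IsOrderedAddMonoid β]
    {K : Set α} (f : ℕ → α → β) (leader : ℕ → α) (T : ℕ)
    (hleaderK : ∀ t ∈ Icc 1 T, leader t ∈ K)
    (hleader : ∀ t ∈ Icc 1 T, ∀ y ∈ K,
      ∑ s ∈ Icc 1 t, f s (leader t) ≤ ∑ s ∈ Icc 1 t, f s y) :
    ∀ y ∈ K, ∑ t ∈ Icc 1 T, f t (leader t) ≤ ∑ t ∈ Icc 1 T, f t y := by
  induction T with
  | zero => simp
  | succ T ih =>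
    intro y hy
    have hsub : Icc 1 T ⊆ Icc 1 (T + 1) := Icc_subset_Icc_right T.le_succ
    have hlast : T + 1 ∈ Icc 1 (T + 1) := by simp
    have hprev := ih (fun t ht => hleaderK t (hsub ht)) (fun t ht => hleader t (hsub ht))
      (leader (T + 1)) (hleaderK _ hlast)
    calc ∑ t ∈ Icc 1 (T + 1), f t (leader t)
        = ∑ t ∈ Icc 1 T, f t (leader t) + f (T + 1) (leader (T + 1)) :=
          sum_Icc_succ_top (by omega) _
      _ ≤ ∑ t ∈ Icc 1 T, f t (leader (T + 1)) + f (T + 1) (leader (T + 1)) := by gcongr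
      _ = ∑ t ∈ Icc 1 (T + 1), f t (leader (T + 1)) := (sum_Icc_succ_top (by omega) _).symm
      _ ≤ ∑ t ∈ Icc 1 (T + 1), f t y := hleader _ hlast y hy

theorem regret_le_gradient_bound_times_distances_general {n : ℕ}
    (K : Set (EuclideanSpace ℝ (Fin n)))
    (T : ℕ)
    (f : ℕ → EuclideanSpace ℝ (Fin n) → ℝ)
    (G : ℝ)
    (hconv : ∀ t ∈ Finset.Icc 1 T, ConvexOn ℝ K (f t))
    (hdiff : ∀ t ∈ Finset.Icc 1 T, Differentiable ℝ (f t))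
    (hG : ∀ t ∈ Finset.Icc 1 T, ∀ x ∈ K, ‖gradient (f t) x‖ ≤ G)
    (xt : ℕ → EuclideanSpace ℝ (Fin n))
    (hxtK : ∀ t ∈ Finset.Icc 1 T, xt t ∈ K)
    (hxtmin : ∀ t ∈ Finset.Icc 1 T, ∀ y ∈ K,
      ∑ s ∈ Finset.Icc 1 t, f s (xt t) ≤ ∑ s ∈ Finset.Icc 1 t, f s y)
    (x : ℕ → EuclideanSpace ℝ (Fin n))
    (hxK : ∀ t ∈ Finset.Icc 1 T, x t ∈ K) :
    ∀ y ∈ K,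
      ∑ t ∈ Finset.Icc 1 T, f t (x t) - ∑ t ∈ Finset.Icc 1 T, f t y
        ≤ G * ∑ t ∈ Finset.Icc 1 T, ‖x t - xt t‖ := by
  intro y hy
  have hleader := be_the_leader f xt T hxtK hxtmin y hy
  calc ∑ t ∈ Icc 1 T, f t (x t) - ∑ t ∈ Icc 1 T, f t y
      ≤ ∑ t ∈ Icc 1 T, f t (x t) - ∑ t ∈ Icc 1 T, f t (xt t) := by gcongr
    _ = ∑ t ∈ Icc 1 T, (f t (x t) - f t (xt t)) := (sum_sub_distrib _ _).symm
    _ ≤ ∑ t ∈ Icc 1 T, G * ‖x t - xt t‖ := sum_le_sum fun t ht =>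
        (hconv t ht).sub_le_mul_norm_sub_of_hasGradientAt (hxK t ht) (hxtK t ht)
          (hdiff t ht (x t)).hasGradientAt (hG t ht (x t) (hxK t ht))
    _ = G * ∑ t ∈ Icc 1 T, ‖x t - xt t‖ := (mul_sum _ _ _).symm

/-- Regret is bounded by `G · ∑_t ‖x_t − x̃_t‖₂`, where `x̃_t` are the
be-the-leader decisions. -/
theorem regret_le_gradient_bound_times_distances {n : ℕ}
    (K : Set (EuclideanSpace ℝ (Fin n)))
    (hKne : K.Nonempty) (hKcp : IsCompact K) (hKcv : Convex ℝ K)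
    (T : ℕ)
    (f : ℕ → EuclideanSpace ℝ (Fin n) → ℝ)
    (G : ℝ)
    (hconv : ∀ t ∈ Finset.Icc 1 T, ConvexOn ℝ K (f t))
    (hdiff : ∀ t ∈ Finset.Icc 1 T, Differentiable ℝ (f t))
    (hG : ∀ t ∈ Finset.Icc 1 T, ∀ x ∈ K, ‖gradient (f t) x‖ ≤ G)
    (xt : ℕ → EuclideanSpace ℝ (Fin n))
    (hxtK : ∀ t ∈ Finset.Icc 1 T, xt t ∈ K)
    (hxtmin : ∀ t ∈ Finset.Icc 1 T, ∀ y ∈ K,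
      ∑ s ∈ Finset.Icc 1 t, f s (xt t) ≤ ∑ s ∈ Finset.Icc 1 t, f s y)
    (x : ℕ → EuclideanSpace ℝ (Fin n))
    (hxK : ∀ t ∈ Finset.Icc 1 T, x t ∈ K) :
    ∀ y ∈ K,
      ∑ t ∈ Finset.Icc 1 T, f t (x t) - ∑ t ∈ Finset.Icc 1 T, f t y
        ≤ G * ∑ t ∈ Finset.Icc 1 T, ‖x t - xt t‖ :=
  regret_le_gradient_bound_times_distances_general K T f G hconv hdiff hG xt hxtK hxtmin x hxK
end

section
/- Let K ⊆ ℝ^n be a nonempty compact convex set, let f_1, …, f_t : ℝ^n → ℝ each be λ-strongly convex over K (λ > 0) with ‖∇f_s(x)‖₂ ≤ G for all x ∈ K and all s ≤ t, let F ⊆ {1,…,t} be a subset of cardinality |F|, let x_t be a minimizer over K of Σ_{s∈F} f_s(x), and let x̃_t be a minimizer over K of Σ_{s=1}^t f_s(x). Then ‖x_t − x̃_t‖₂ ≤ 2G(t − |F|)/(tλ). -/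
/-!
The full objective `∑_{s ≤ t} f_s` is `tλ`-strongly convex on `K`, so it grows at least like
`tλ/2 · ‖x - x̃‖²` away from its minimizer `x̃`. At `x_t` the functions indexed by `F` contribute
no increase (their sum is minimized there), and each of the remaining `t - |F|` functions
increases by at most `G‖x_t - x̃‖` by the gradient bound. Hence
`tλ/2 · ‖x_t - x̃‖² ≤ (t - |F|) G ‖x_t - x̃‖`.
-/

open scoped RealInnerProductSpace
open Finset Filter Topology

section StrongConvexity

variable {E : Type*} [NormedAddCommGroup E] [InnerProductSpace ℝ E]
  {s : Set E} {m n : ℝ} {f g : E → ℝ}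

lemma StrongConvexOn.add (hf : StrongConvexOn s m f) (hg : StrongConvexOn s n g) :
    StrongConvexOn s (m + n) (f + g) := by
  have hmod : (fun r : ℝ ↦ (m + n) / 2 * r ^ 2) =
      (fun r ↦ m / 2 * r ^ 2) + fun r ↦ n / 2 * r ^ 2 := by
    funext r
    simp only [Pi.add_apply]
    ring
  unfold StrongConvexOn
  rw [hmod]
  exact UniformConvexOn.add hf hg

lemma StrongConvexOn.sum {ι : Type*} {S : Finset ι} {f : ι → E → ℝ} (hs : Convex ℝ s)
    (hf : ∀ i ∈ S, StrongConvexOn s m (f i)) :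
    StrongConvexOn s (#S * m) (∑ i ∈ S, f i) := by
  induction S using Finset.cons_induction with
  | empty =>
    rw [card_empty, Nat.cast_zero, zero_mul, sum_empty, strongConvexOn_zero]
    exact convexOn_const (0 : ℝ) hs
  | cons i S hi ih =>
    rw [sum_cons, card_cons, Nat.cast_succ, add_one_mul, add_comm]
    exact (hf i (mem_cons_self i S)).add (ih fun j hj ↦ hf j (mem_cons_of_mem hj))

lemma strongConvexOn_of_inner_le (hs : Convex ℝ s) (g : E → E)
    (h : ∀ x ∈ s, ∀ y ∈ s, f x + ⟪g x, y - x⟫ + m / 2 * ‖x - y‖ ^ 2 ≤ f y) :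
    StrongConvexOn s m f := by
  refine ⟨hs, fun x hx y hy a b ha hb hab ↦ ?_⟩
  obtain rfl : a = 1 - b := eq_sub_of_add_eq hab
  set z := (1 - b) • x + b • y
  have hzs : z ∈ s := hs hx hy ha hb hab
  have hxz : x - z = b • (x - y) := by module
  have hyz : y - z = -((1 - b) • (x - y)) := by module
  have hx' := h z hzs x hx
  have hy' := h z hzs y hy
  rw [hxz, norm_sub_rev, hxz, real_inner_smul_right, norm_smul, Real.norm_of_nonneg hb] at hx'
  rw [hyz, norm_sub_rev, hyz, inner_neg_right, real_inner_smul_right, norm_neg, norm_smul,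
    Real.norm_of_nonneg ha] at hy'
  simp only [smul_eq_mul]
  nlinarith [mul_le_mul_of_nonneg_left hx' ha, mul_le_mul_of_nonneg_left hy' hb]

lemma StrongConvexOn.sq_norm_sub_le_of_isMinOn (hf : StrongConvexOn s m f) {x y : E}
    (hx : x ∈ s) (hy : y ∈ s) (hmin : IsMinOn f s x) :
    m / 2 * ‖y - x‖ ^ 2 ≤ f y - f x := by
  -- compare `f x` with `f` at `(1 - θ) • x + θ • y` and let `θ → 0⁺`
  set C := m / 2 * ‖y - x‖ ^ 2
  have hshrink : ∀ θ ∈ Set.Ioo (0 : ℝ) 1, (1 - θ) * C ≤ f y - f x := by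
    rintro θ ⟨hθ0, hθ1⟩
    have hconv := hf.2 hx hy (sub_nonneg.2 hθ1.le) hθ0.le (sub_add_cancel 1 θ)
    have hle : f x ≤ f ((1 - θ) • x + θ • y) :=
      hmin (hf.1 hx hy (sub_nonneg.2 hθ1.le) hθ0.le (sub_add_cancel 1 θ))
    rw [norm_sub_rev] at hconv
    change _ ≤ _ • _ + _ • _ - _ * C at hconv
    simp only [smul_eq_mul] at hconv
    have : θ * ((1 - θ) * C) ≤ θ * (f y - f x) := by nlinarith
    exact le_of_mul_le_mul_left this hθ0
  have hlim : Tendsto (fun θ : ℝ ↦ (1 - θ) * C) (𝓝[>] 0) (𝓝 C) := by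
    have := ((continuous_const.sub continuous_id).mul continuous_const).tendsto (0 : ℝ)
      (f := fun θ : ℝ ↦ (1 - θ) * C)
    simpa using this.mono_left nhdsWithin_le_nhds
  exact le_of_tendsto hlim (eventually_of_mem (Ioo_mem_nhdsGT one_pos) hshrink)

lemma card_mul_sq_norm_sub_le_sum_sub_of_inner_le {ι : Type*} {S : Finset ι} {f : ι → E → ℝ}
    (g : ι → E → E) (hs : Convex ℝ s)
    (h : ∀ i ∈ S, ∀ x ∈ s, ∀ y ∈ s, f i x + ⟪g i x, y - x⟫ + m / 2 * ‖x - y‖ ^ 2 ≤ f i y)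
    {x y : E} (hx : x ∈ s) (hy : y ∈ s) (hmin : ∀ z ∈ s, ∑ i ∈ S, f i x ≤ ∑ i ∈ S, f i z) :
    #S * m / 2 * ‖y - x‖ ^ 2 ≤ ∑ i ∈ S, f i y - ∑ i ∈ S, f i x := by
  have hconv := StrongConvexOn.sum hs fun i hi ↦ strongConvexOn_of_inner_le hs (g i) (h i hi)
  have := hconv.sq_norm_sub_le_of_isMinOn hx hy fun z hz ↦ by
    simpa only [Set.mem_ofPred_eq, Finset.sum_apply] using hmin z hz
  simpa only [Finset.sum_apply, mul_div_assoc] using this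

lemma sub_le_mul_norm_of_inner_le {v x y : E} {G : ℝ} (h : f x + ⟪v, y - x⟫ ≤ f y)
    (hv : ‖v‖ ≤ G) : f x - f y ≤ G * ‖x - y‖ := by
  have hcs : -⟪v, y - x⟫ ≤ ‖v‖ * ‖x - y‖ := by
    rw [norm_sub_rev x y]
    exact (neg_le_abs _).trans (abs_real_inner_le_norm v (y - x))
  nlinarith [mul_le_mul_of_nonneg_right hv (norm_nonneg (x - y))]

end StrongConvexity

lemma sum_sub_sum_le_card_sdiff_mul {ι : Type*} [DecidableEq ι] {S T : Finset ι} (hST : S ⊆ T)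
    {u v : ι → ℝ} {c : ℝ} (hS : ∑ i ∈ S, u i ≤ ∑ i ∈ S, v i) (hrest : ∀ i ∈ T \ S, u i - v i ≤ c) :
    ∑ i ∈ T, u i - ∑ i ∈ T, v i ≤ #(T \ S) * c := by
  rw [← sum_sdiff hST, ← sum_sdiff hST (f := v), ← nsmul_eq_mul]
  have := sum_le_card_nsmul _ _ _ hrest
  rw [sum_sub_distrib] at this
  linarith

lemma le_div_of_mul_sq_le_mul {a b d : ℝ} (ha : 0 < a) (hb : 0 ≤ b) (hd : 0 ≤ d)
    (h : a * d ^ 2 ≤ b * d) : d ≤ b / a := by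
  rcases hd.eq_or_lt with rfl | hd
  · positivity
  · rw [le_div_iff₀ ha]
    nlinarith

theorem ftdl_distance_to_ideal_general {n : ℕ}
    (K : Set (EuclideanSpace ℝ (Fin n)))
    (hKcv : Convex ℝ K)
    (t : ℕ) (ht : 1 ≤ t)
    (f : ℕ → EuclideanSpace ℝ (Fin n) → ℝ)
    (lam G : ℝ) (hlam : 0 < lam)
    (hsc : ∀ s ∈ Finset.Icc 1 t, ∀ x ∈ K, ∀ y ∈ K,
      f s x + ⟪gradient (f s) x, y - x⟫ + lam / 2 * ‖x - y‖ ^ 2 ≤ f s y)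
    (hG : ∀ s ∈ Finset.Icc 1 t, ∀ x ∈ K, ‖gradient (f s) x‖ ≤ G)
    (F : Finset ℕ) (hF : F ⊆ Finset.Icc 1 t)
    (xt xtilde : EuclideanSpace ℝ (Fin n))
    (hxtK : xt ∈ K)
    (hxtmin : ∀ y ∈ K, ∑ s ∈ F, f s xt ≤ ∑ s ∈ F, f s y)
    (hxtildeK : xtilde ∈ K)
    (hxtildemin : ∀ y ∈ K,
      ∑ s ∈ Finset.Icc 1 t, f s xtilde ≤ ∑ s ∈ Finset.Icc 1 t, f s y) :
    ‖xt - xtilde‖ ≤ 2 * G * ((t : ℝ) - (F.card : ℝ)) / ((t : ℝ) * lam) := by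
  have hcard : #(Icc 1 t) = t := by simp
  have hFt : (#F : ℝ) ≤ t := by exact_mod_cast hcard ▸ card_le_card hF
  have hG0 : 0 ≤ G := (norm_nonneg _).trans (hG 1 (by simp [ht]) xt hxtK)
  have hgrowth := card_mul_sq_norm_sub_le_sum_sub_of_inner_le (fun s ↦ gradient (f s)) hKcv hsc
    hxtildeK hxtK hxtildemin
  have hrest : ∀ s ∈ Icc 1 t \ F, f s xt - f s xtilde ≤ G * ‖xt - xtilde‖ := fun s hs ↦
    have hsT := (mem_sdiff.1 hs).1
    sub_le_mul_norm_of_inner_le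
      ((le_add_of_nonneg_right (by positivity)).trans (hsc s hsT xt hxtK xtilde hxtildeK))
      (hG s hsT xt hxtK)
  have hsplit := sum_sub_sum_le_card_sdiff_mul hF (hxtmin xtilde hxtildeK) hrest
  rw [card_sdiff_of_subset hF, hcard, Nat.cast_sub (by exact_mod_cast hFt)] at hsplit
  rw [hcard] at hgrowth
  have hdiv := le_div_of_mul_sq_le_mul (a := t * lam / 2) (b := (t - #F) * G) (by positivity)
    (mul_nonneg (sub_nonneg.2 hFt) hG0) (norm_nonneg (xt - xtilde)) (by linarith)
  exact hdiv.trans_eq (by ring)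

/-- Distance between the FTDL decision (computed from a partial feedback
set `F ⊆ {1,…,t}`) and the ideal be-the-leader decision:
`‖x_t − x̃_t‖₂ ≤ 2G(t − |F|)/(tλ)`. -/
theorem ftdl_distance_to_ideal {n : ℕ}
    (K : Set (EuclideanSpace ℝ (Fin n)))
    (hKne : K.Nonempty) (hKcp : IsCompact K) (hKcv : Convex ℝ K)
    (t : ℕ) (ht : 1 ≤ t)
    (f : ℕ → EuclideanSpace ℝ (Fin n) → ℝ)
    (lam G : ℝ) (hlam : 0 < lam)
    (hsc : ∀ s ∈ Finset.Icc 1 t, ∀ x ∈ K, ∀ y ∈ K,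
      f s x + ⟪gradient (f s) x, y - x⟫ + lam / 2 * ‖x - y‖ ^ 2 ≤ f s y)
    (hG : ∀ s ∈ Finset.Icc 1 t, ∀ x ∈ K, ‖gradient (f s) x‖ ≤ G)
    (F : Finset ℕ) (hF : F ⊆ Finset.Icc 1 t)
    (xt xtilde : EuclideanSpace ℝ (Fin n))
    (hxtK : xt ∈ K)
    (hxtmin : ∀ y ∈ K, ∑ s ∈ F, f s xt ≤ ∑ s ∈ F, f s y)
    (hxtildeK : xtilde ∈ K)
    (hxtildemin : ∀ y ∈ K,
      ∑ s ∈ Finset.Icc 1 t, f s xtilde ≤ ∑ s ∈ Finset.Icc 1 t, f s y) :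
    ‖xt - xtilde‖ ≤ 2 * G * ((t : ℝ) - (F.card : ℝ)) / ((t : ℝ) * lam) :=
  ftdl_distance_to_ideal_general K hKcv t ht f lam G hlam hsc hG F hF xt xtilde hxtK hxtmin hxtildeK
    hxtildemin
end

section
/- Let K ⊆ ℝ^n be a convex set, let f : ℝ^n → ℝ be λ-strongly convex over K (λ > 0), let u ∈ K, set z = ∇f(u) − λu, and define the surrogate f̃(x) = ⟨z, x⟩ + (λ/2)‖x‖₂². Then for every v ∈ K, f(u) − f(v) ≤ f̃(u) − f̃(v). -/
open scoped RealInnerProductSpace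

section QuadraticSurrogate

variable {E : Type*} [NormedAddCommGroup E] [InnerProductSpace ℝ E]

noncomputable def quadraticSurrogate (z : E) (lam : ℝ) (x : E) : ℝ :=
  ⟪z, x⟫ + lam / 2 * ‖x‖ ^ 2

/-- The right-hand side is exactly the upper bound on `f u - f v` that `λ`-strong convexity
of `f` at `u` gives when `g = ∇f(u)`. -/
theorem quadraticSurrogate_sub_eq (g u v : E) (lam : ℝ) :
    quadraticSurrogate (g - lam • u) lam u - quadraticSurrogate (g - lam • u) lam v =
      ⟪g, u - v⟫ - lam / 2 * ‖u - v‖ ^ 2 := by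
  simp only [quadraticSurrogate, inner_sub_left, inner_sub_right, real_inner_smul_left,
    norm_sub_sq_real, real_inner_self_eq_norm_sq]
  ring

end QuadraticSurrogate

theorem surrogate_upper_bounds_regret_general {n : ℕ}
    (K : Set (EuclideanSpace ℝ (Fin n)))
    (f : EuclideanSpace ℝ (Fin n) → ℝ)
    (lam : ℝ)
    (hsc : ∀ x ∈ K, ∀ y ∈ K,
      f x + ⟪gradient f x, y - x⟫ + lam / 2 * ‖x - y‖ ^ 2 ≤ f y)
    (u : EuclideanSpace ℝ (Fin n)) (hu : u ∈ K)
    (z : EuclideanSpace ℝ (Fin n)) (hz : z = gradient f u - lam • u) :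
    ∀ v ∈ K,
      f u - f v ≤ (⟪z, u⟫ + lam / 2 * ‖u‖ ^ 2) - (⟪z, v⟫ + lam / 2 * ‖v‖ ^ 2) := by
  intro v hv
  subst hz
  change f u - f v ≤ quadraticSurrogate _ lam u - quadraticSurrogate _ lam v
  rw [quadraticSurrogate_sub_eq]
  have hdir : ⟪gradient f u, v - u⟫ = -⟪gradient f u, u - v⟫ := by
    rw [← inner_neg_right, neg_sub]
  linarith [hsc u hu v hv]

/-- Surrogate losses upper-bound the instantaneous regret of strongly
convex losses: `f(u) − f(v) ≤ f̃(u) − f̃(v)` where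
`f̃(x) = ⟨∇f(u) − λu, x⟩ + (λ/2)‖x‖²`. -/
theorem surrogate_upper_bounds_regret {n : ℕ}
    (K : Set (EuclideanSpace ℝ (Fin n))) (hKcv : Convex ℝ K)
    (f : EuclideanSpace ℝ (Fin n) → ℝ)
    (lam : ℝ) (hlam : 0 < lam)
    (hsc : ∀ x ∈ K, ∀ y ∈ K,
      f x + ⟪gradient f x, y - x⟫ + lam / 2 * ‖x - y‖ ^ 2 ≤ f y)
    (u : EuclideanSpace ℝ (Fin n)) (hu : u ∈ K)
    (z : EuclideanSpace ℝ (Fin n)) (hz : z = gradient f u - lam • u) :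
    ∀ v ∈ K,
      f u - f v ≤ (⟪z, u⟫ + lam / 2 * ‖u‖ ^ 2) - (⟪z, v⟫ + lam / 2 * ‖v‖ ^ 2) :=
  surrogate_upper_bounds_regret_general K f lam hsc u hu z hz
end
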